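/- Let G, Ĝ be real p×n matrices, Σ_η a real symmetric positive definite p×p matrix, Σ_ω a real symmetric positive definite n×n matrix, α ∈ (0,1], and y ∈ ℝᵖ. Let C, Ĉ be real symmetric positive definite n×n matrices satisfying C⁻¹ = Gᵀ Σ_η⁻¹ G + (α² C + Σ_ω)⁻¹ and Ĉ⁻¹ = Ĝᵀ Σ_η⁻¹ Ĝ + (α² Ĉ + Σ_ω)⁻¹, and let r, r̂ ∈ ℝⁿ satisfy C⁻¹ r = Gᵀ Σ_η⁻¹ y + α (α² C + Σ_ω)⁻¹ r and Ĉ⁻¹ r̂ = Ĝᵀ Σ_η⁻¹ y + α (α² Ĉ + Σ_ω)⁻¹ r̂. Assume Gᵀ Σ_η⁻¹ G is positive definite, ‖G − Ĝ‖₂ ≤ ε for some ε > 0, and there exists β ∈ [0,1) with ‖(α² C + Σ_ω)⁻¹ − (α² Ĉ + Σ_ω)⁻¹‖₂ ≤ β ‖C⁻¹ − Ĉ⁻¹‖₂. Then ‖r − r̂‖₂ ≤ ‖(Gᵀ Σ_η⁻¹ G)⁻¹‖₂ · ( ε ‖Σ_η⁻¹ y‖₂ + (1 + α β) ‖r̂‖₂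 ‖C⁻¹ − Ĉ⁻¹‖₂ ). -/

import Mathlib

open Matrix

/-- The spectral norm of a real matrix: the operator norm induced by the
Euclidean norms on the domain and codomain. -/
noncomputable def specNorm {m n : ℕ} (A : Matrix (Fin m) (Fin n) ℝ) : ℝ :=
  ‖LinearMap.toContinuousLinearMap (Matrix.toEuclideanLin A)‖

/-- The Euclidean norm of a real vector. -/
noncomputable def eucNorm {n : ℕ} (v : Fin n → ℝ) : ℝ :=
  ‖(EuclideanSpace.equiv (Fin n) ℝ).symm v‖

/-!
With `M = Gᵀ Σ_η⁻¹ G` and `B = (α² C + Σ_ω)⁻¹`, the fixed-point equation for `C` reads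
`C⁻¹ = M + B`, and subtracting the two mean equations shows that `r - r̂` solves
`(M + (1 - α) B) (r - r̂) = (G - Ĝ)ᵀ Σ_η⁻¹ y + (Ĉ⁻¹ - C⁻¹) r̂ + α (B - B̂) r̂`.
Since `B ≥ 0` and `α ≤ 1`, the matrix on the left dominates `M > 0` in the Loewner order, and
any solution of `A x = w` with `A ≥ M` obeys `‖x‖ ≤ ‖M⁻¹‖ ‖w‖`: by Cauchy–Schwarz for the form
of `M`, `‖x‖² ≤ ‖M⁻¹‖ xᵀ M x ≤ ‖M⁻¹‖ xᵀ w`. The three terms on the right are bounded by `ε`,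
`‖C⁻¹ - Ĉ⁻¹‖` and the contraction hypothesis respectively.
-/

-- `specNorm A` is definitionally the L2 operator norm `‖A‖` of this scope, and `eucNorm v` is
-- definitionally `‖WithLp.toLp 2 v‖`.
open scoped Matrix.Norms.L2Operator

theorem Matrix.PosSemidef.dotProduct_mulVec_mul_self_le {ι : Type*} [Fintype ι]
    {M : Matrix ι ι ℝ} (hM : M.PosSemidef) (x y : ι → ℝ) :
    (x ⬝ᵥ M *ᵥ y) * (x ⬝ᵥ M *ᵥ y) ≤ (x ⬝ᵥ M *ᵥ x) * (y ⬝ᵥ M *ᵥ y) := by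
  let := M.toSeminormedAddCommGroup hM
  let := M.toInnerProductSpace hM
  have h := real_inner_mul_inner_self_le x y
  change (M *ᵥ y ⬝ᵥ star x) * (M *ᵥ y ⬝ᵥ star x) ≤ (M *ᵥ x ⬝ᵥ star x) * (M *ᵥ y ⬝ᵥ star y) at h
  simpa only [star_trivial, dotProduct_comm (M *ᵥ _)] using h

section

variable {m n : ℕ}

theorem eucNorm_nonneg (v : Fin n → ℝ) : 0 ≤ eucNorm v := norm_nonneg _

theorem specNorm_nonneg (A : Matrix (Fin m) (Fin n) ℝ) : 0 ≤ specNorm A := norm_nonneg _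

theorem eucNorm_add_le (u v : Fin n → ℝ) : eucNorm (u + v) ≤ eucNorm u + eucNorm v :=
  norm_add_le (WithLp.toLp 2 u) (WithLp.toLp 2 v)

theorem eucNorm_add_add_le (u v w : Fin n → ℝ) :
    eucNorm (u + v + w) ≤ eucNorm u + eucNorm v + eucNorm w :=
  (eucNorm_add_le _ _).trans (add_le_add_left (eucNorm_add_le _ _) _)

theorem eucNorm_smul (c : ℝ) (v : Fin n → ℝ) : eucNorm (c • v) = |c| * eucNorm v :=
  norm_smul c (WithLp.toLp 2 v)

theorem eucNorm_mulVec_le (A : Matrix (Fin m) (Fin n) ℝ) (v : Fin n → ℝ) :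
    eucNorm (A *ᵥ v) ≤ specNorm A * eucNorm v :=
  A.l2_opNorm_mulVec (WithLp.toLp 2 v)

theorem dotProduct_le_eucNorm_mul (u v : Fin n → ℝ) : u ⬝ᵥ v ≤ eucNorm u * eucNorm v :=
  dotProduct_comm u v ▸ real_inner_le_norm (WithLp.toLp 2 u) (WithLp.toLp 2 v)

theorem eucNorm_sq (v : Fin n → ℝ) : eucNorm v ^ 2 = v ⬝ᵥ v :=
  (real_inner_self_eq_norm_sq (WithLp.toLp 2 v)).symm

theorem specNorm_transpose (A : Matrix (Fin m) (Fin n) ℝ) : specNorm Aᵀ = specNorm A :=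
  l2_opNorm_conjTranspose A

theorem specNorm_sub_comm (A B : Matrix (Fin m) (Fin n) ℝ) :
    specNorm (A - B) = specNorm (B - A) :=
  norm_sub_rev A B

end

theorem le_of_mul_self_le_mul {x c : ℝ} (hc : 0 ≤ c) (h : x * x ≤ c * x) : x ≤ c := by
  nlinarith

theorem Matrix.PosDef.eucNorm_sq_le {n : ℕ} {M : Matrix (Fin n) (Fin n) ℝ} (hM : M.PosDef)
    (u : Fin n → ℝ) : eucNorm u ^ 2 ≤ specNorm M⁻¹ * (u ⬝ᵥ M *ᵥ u) := by
  set v := M⁻¹ *ᵥ u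
  have hMv : M *ᵥ v = u := by
    rw [mulVec_mulVec, mul_nonsing_inv _ ((isUnit_iff_isUnit_det M).1 hM.isUnit), one_mulVec]
  have hu : 0 ≤ u ⬝ᵥ M *ᵥ u := by simpa using hM.posSemidef.dotProduct_mulVec_nonneg u
  have hCS : eucNorm u ^ 2 * eucNorm u ^ 2 ≤ (u ⬝ᵥ M *ᵥ u) * (v ⬝ᵥ u) := by
    simpa only [hMv, eucNorm_sq] using hM.posSemidef.dotProduct_mulVec_mul_self_le u v
  have hvu : v ⬝ᵥ u ≤ specNorm M⁻¹ * eucNorm u * eucNorm u :=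
    (dotProduct_le_eucNorm_mul v u).trans <|
      mul_le_mul_of_nonneg_right (eucNorm_mulVec_le _ _) (eucNorm_nonneg u)
  exact le_of_mul_self_le_mul (mul_nonneg (specNorm_nonneg _) hu) <| by
    nlinarith [mul_le_mul_of_nonneg_left hvu hu]

theorem Matrix.PosDef.eucNorm_le_of_mulVec_eq {n : ℕ} {M A : Matrix (Fin n) (Fin n) ℝ}
    (hM : M.PosDef) (hAM : (A - M).PosSemidef) {x w : Fin n → ℝ} (hx : A *ᵥ x = w) :
    eucNorm x ≤ specNorm M⁻¹ * eucNorm w := by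
  have hMA : x ⬝ᵥ M *ᵥ x ≤ x ⬝ᵥ w := by
    have := hAM.dotProduct_mulVec_nonneg x
    rw [star_trivial, sub_mulVec, dotProduct_sub, hx] at this
    linarith
  have hsq : eucNorm x ^ 2 ≤ specNorm M⁻¹ * eucNorm x * eucNorm w :=
    calc eucNorm x ^ 2 ≤ specNorm M⁻¹ * (x ⬝ᵥ M *ᵥ x) := hM.eucNorm_sq_le x
      _ ≤ specNorm M⁻¹ * (eucNorm x * eucNorm w) :=
        mul_le_mul_of_nonneg_left (hMA.trans (dotProduct_le_eucNorm_mul x w)) (specNorm_nonneg _)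
      _ = specNorm M⁻¹ * eucNorm x * eucNorm w := by ring
  exact le_of_mul_self_le_mul (mul_nonneg (specNorm_nonneg _) (eucNorm_nonneg w)) <| by
    linarith

theorem mulVec_sub_eq_of_fixedPoint {ι R : Type*} [Fintype ι] [CommRing R]
    {K Khat M B Bhat : Matrix ι ι R} {b bhat r rhat : ι → R} (a : R) (hK : K = M + B)
    (hr : K *ᵥ r = b + a • (B *ᵥ r)) (hrhat : Khat *ᵥ rhat = bhat + a • (Bhat *ᵥ rhat)) :
    (M + (1 - a) • B) *ᵥ (r - rhat) =
      (b - bhat) + (Khat - K) *ᵥ rhat + a • ((B - Bhat) *ᵥ rhat) := by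
  have hb : b = (M + B) *ᵥ r - a • (B *ᵥ r) := by rw [← hK, hr]; abel
  have hbhat : bhat = Khat *ᵥ rhat - a • (Bhat *ᵥ rhat) := by rw [hrhat]; abel
  rw [hb, hbhat, hK]
  simp only [add_mulVec, sub_mulVec, smul_mulVec, mulVec_sub]
  module

theorem stmt_11_general {p n : ℕ} (G Ghat : Matrix (Fin p) (Fin n) ℝ)
    (Sη : Matrix (Fin p) (Fin p) ℝ)
    (Sω : Matrix (Fin n) (Fin n) ℝ) (hSω : Sω.PosDef)
    (α : ℝ) (hα0 : 0 < α) (hα1 : α ≤ 1) (y : Fin p → ℝ)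
    (C Chat : Matrix (Fin n) (Fin n) ℝ) (hC : C.PosDef)
    (hfixC : C⁻¹ = Gᵀ * Sη⁻¹ * G + (α ^ 2 • C + Sω)⁻¹)
    (r rhat : Fin n → ℝ)
    (hr : C⁻¹ *ᵥ r = (Gᵀ * Sη⁻¹) *ᵥ y + α • ((α ^ 2 • C + Sω)⁻¹ *ᵥ r))
    (hrhat : Chat⁻¹ *ᵥ rhat =
      (Ghatᵀ * Sη⁻¹) *ᵥ y + α • ((α ^ 2 • Chat + Sω)⁻¹ *ᵥ rhat))
    (hGPD : (Gᵀ * Sη⁻¹ * G).PosDef)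
    (ε : ℝ) (hGG : specNorm (G - Ghat) ≤ ε)
    (β : ℝ)
    (hcontr : specNorm ((α ^ 2 • C + Sω)⁻¹ - (α ^ 2 • Chat + Sω)⁻¹) ≤
      β * specNorm (C⁻¹ - Chat⁻¹)) :
    eucNorm (r - rhat) ≤ specNorm (Gᵀ * Sη⁻¹ * G)⁻¹ *
      (ε * eucNorm (Sη⁻¹ *ᵥ y) + (1 + α * β) * eucNorm rhat * specNorm (C⁻¹ - Chat⁻¹)) := by
  set B := (α ^ 2 • C + Sω)⁻¹
  set Bhat := (α ^ 2 • Chat + Sω)⁻¹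
  have hB : B.PosDef := ((hC.smul (pow_pos hα0 2)).add hSω).inv
  have hAM : (Gᵀ * Sη⁻¹ * G + (1 - α) • B - Gᵀ * Sη⁻¹ * G).PosSemidef := by
    rw [add_sub_cancel_left]
    exact hB.posSemidef.smul (sub_nonneg.2 hα1)
  have hdiff : (Gᵀ * Sη⁻¹) *ᵥ y - (Ghatᵀ * Sη⁻¹) *ᵥ y = (G - Ghat)ᵀ *ᵥ (Sη⁻¹ *ᵥ y) := by
    rw [← sub_mulVec, ← Matrix.sub_mul, ← transpose_sub, mulVec_mulVec]
  have hres := hGPD.eucNorm_le_of_mulVec_eq hAM (mulVec_sub_eq_of_fixedPoint α hfixC hr hrhat)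
  rw [hdiff] at hres
  refine hres.trans (mul_le_mul_of_nonneg_left ?_ (specNorm_nonneg _))
  have h1 : eucNorm ((G - Ghat)ᵀ *ᵥ (Sη⁻¹ *ᵥ y)) ≤ ε * eucNorm (Sη⁻¹ *ᵥ y) := by
    refine (eucNorm_mulVec_le _ _).trans ?_
    rw [specNorm_transpose]
    exact mul_le_mul_of_nonneg_right hGG (eucNorm_nonneg _)
  have h2 : eucNorm ((Chat⁻¹ - C⁻¹) *ᵥ rhat) ≤ specNorm (C⁻¹ - Chat⁻¹) * eucNorm rhat := by
    rw [specNorm_sub_comm C⁻¹]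
    exact eucNorm_mulVec_le _ _
  have h3 : eucNorm (α • ((B - Bhat) *ᵥ rhat)) ≤
      α * (β * specNorm (C⁻¹ - Chat⁻¹) * eucNorm rhat) := by
    rw [eucNorm_smul, abs_of_pos hα0]
    exact mul_le_mul_of_nonneg_left ((eucNorm_mulVec_le _ _).trans
      (mul_le_mul_of_nonneg_right hcontr (eucNorm_nonneg _))) hα0.le
  linarith [eucNorm_add_add_le ((G - Ghat)ᵀ *ᵥ (Sη⁻¹ *ᵥ y)) ((Chat⁻¹ - C⁻¹) *ᵥ rhat)
    (α • ((B - Bhat) *ᵥ rhat))]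

theorem stmt_11 {p n : ℕ} (G Ghat : Matrix (Fin p) (Fin n) ℝ)
    (Sη : Matrix (Fin p) (Fin p) ℝ) (hSη : Sη.PosDef)
    (Sω : Matrix (Fin n) (Fin n) ℝ) (hSω : Sω.PosDef)
    (α : ℝ) (hα0 : 0 < α) (hα1 : α ≤ 1) (y : Fin p → ℝ)
    (C Chat : Matrix (Fin n) (Fin n) ℝ) (hC : C.PosDef) (hChat : Chat.PosDef)
    (hfixC : C⁻¹ = Gᵀ * Sη⁻¹ * G + (α ^ 2 • C + Sω)⁻¹)
    (hfixChat : Chat⁻¹ = Ghatᵀ * Sη⁻¹ * Ghat + (α ^ 2 • Chat + Sω)⁻¹)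
    (r rhat : Fin n → ℝ)
    (hr : C⁻¹ *ᵥ r = (Gᵀ * Sη⁻¹) *ᵥ y + α • ((α ^ 2 • C + Sω)⁻¹ *ᵥ r))
    (hrhat : Chat⁻¹ *ᵥ rhat =
      (Ghatᵀ * Sη⁻¹) *ᵥ y + α • ((α ^ 2 • Chat + Sω)⁻¹ *ᵥ rhat))
    (hGPD : (Gᵀ * Sη⁻¹ * G).PosDef)
    (ε : ℝ) (hε : 0 < ε) (hGG : specNorm (G - Ghat) ≤ ε)
    (β : ℝ) (hβ0 : 0 ≤ β) (hβ1 : β < 1)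
    (hcontr : specNorm ((α ^ 2 • C + Sω)⁻¹ - (α ^ 2 • Chat + Sω)⁻¹) ≤
      β * specNorm (C⁻¹ - Chat⁻¹)) :
    eucNorm (r - rhat) ≤ specNorm (Gᵀ * Sη⁻¹ * G)⁻¹ *
      (ε * eucNorm (Sη⁻¹ *ᵥ y) + (1 + α * β) * eucNorm rhat * specNorm (C⁻¹ - Chat⁻¹)) :=
  stmt_11_general G Ghat Sη Sω hSω α hα0 hα1 y C Chat hC hfixC r rhat hr hrhat hGPD ε hGG β hcontr
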